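/- Let μ > 0, r ∈ ℝ, β ∈ (0,1). There exists a constant C = C(μ, r, β) > 0 such that for all u ≥ 0: (ln(u+e) + u/(u+e)) · (r·u − μ·u²/(ln(u+e))^{β}) + u·ln(u+e) ≤ (μ/2) · u² · (ln(u+e))^{1−β} + C. -/

import Mathlib

/-! Write `L = log (u + e) ≥ 1`. Since `0 ≤ u / (u + e) ≤ 1 ≤ L`, the left side is at most
`(2|r| + 1) u L - μ u² L^(1-β)`. As `L` grows slower than any linear function of `u`,
`(2|r| + 1) u L ≤ (3μ/2) u² + C`, and `u² ≤ u² L^(1-β)` because `β < 1`. -/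

open Real

namespace Real

lemma one_le_log_add_exp_one {u : ℝ} (hu : 0 ≤ u) : 1 ≤ log (u + exp 1) :=
  (le_log_iff_exp_le (by positivity)).2 (by linarith)

lemma log_le_div_add_log_sub_one {x k : ℝ} (hx : 0 < x) (hk : 0 < k) :
    log x ≤ x / k + log k - 1 := by
  have h := log_le_sub_one_of_pos (div_pos hx hk)
  rw [log_div hx.ne' hk.ne'] at h
  linarith

lemma exists_mul_mul_log_add_exp_one_le {A c : ℝ} (hA : 0 < A) (hc : 0 < c) :
    ∃ C, ∀ u : ℝ, 0 ≤ u → A * u * log (u + exp 1) ≤ c * u ^ 2 + C := by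
  set k := 2 * A / c
  set B := exp 1 / k + log k - 1
  refine ⟨(A * B) ^ 2 / (2 * c), fun u hu => ?_⟩
  have hlog : log (u + exp 1) ≤ (u + exp 1) / k + log k - 1 :=
    log_le_div_add_log_sub_one (by positivity) (by positivity)
  have hAu : A * u * log (u + exp 1) ≤ c / 2 * u ^ 2 + A * B * u := by
    calc A * u * log (u + exp 1) ≤ A * u * ((u + exp 1) / k + log k - 1) := by gcongr
      _ = A / k * u ^ 2 + A * B * u := by simp only [B]; ring
      _ = c / 2 * u ^ 2 + A * B * u := by rw [show A / k = c / 2 by simp only [k]; field_simp]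
  have hAM : A * B * u ≤ c / 2 * u ^ 2 + (A * B) ^ 2 / (2 * c) := by
    have h := div_nonneg (sq_nonneg (c * u - A * B)) (by positivity : (0 : ℝ) ≤ 2 * c)
    have hsq : (c * u - A * B) ^ 2 / (2 * c) =
        c / 2 * u ^ 2 + (A * B) ^ 2 / (2 * c) - A * B * u := by
      field_simp; ring
    linarith
  linarith

end Real

lemma reaction_term_le {μ r β u L q : ℝ} (hμ : 0 ≤ μ) (hu : 0 ≤ u) (hL : 0 < L)
    (hq₀ : 0 ≤ q) (hqL : q ≤ L) :
    (L + q) * (r * u - μ * u ^ 2 / L ^ β) + u * L ≤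
      (2 * |r| + 1) * u * L - μ * u ^ 2 * L ^ (1 - β) := by
  have hr : (L + q) * (r * u) ≤ 2 * |r| * u * L :=
    calc (L + q) * (r * u) ≤ (L + q) * (|r| * u) := by gcongr; exact le_abs_self r
      _ ≤ 2 * L * (|r| * u) := by gcongr; linarith
      _ = 2 * |r| * u * L := by ring
  have hD : L * (μ * u ^ 2 / L ^ β) ≤ (L + q) * (μ * u ^ 2 / L ^ β) := by gcongr; linarith
  have hLD : L * (μ * u ^ 2 / L ^ β) = μ * u ^ 2 * L ^ (1 - β) := by
    rw [rpow_sub hL, rpow_one]; ring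
  linarith

theorem reaction_term_estimate_general (μ r β : ℝ) (hμ : 0 < μ) (hβ₁ : β < 1) :
    ∃ C > 0, ∀ u : ℝ, 0 ≤ u →
      (Real.log (u + Real.exp 1) + u / (u + Real.exp 1)) *
          (r * u - μ * u ^ 2 / (Real.log (u + Real.exp 1)) ^ β) +
        u * Real.log (u + Real.exp 1) ≤
      (μ / 2) * u ^ 2 * (Real.log (u + Real.exp 1)) ^ (1 - β) + C := by
  obtain ⟨C, hC⟩ := exists_mul_mul_log_add_exp_one_le (A := 2 * |r| + 1) (c := 3 * μ / 2)
    (by positivity) (by positivity)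
  refine ⟨max C 1, by positivity, fun u hu => ?_⟩
  have hL := one_le_log_add_exp_one hu
  have hq : u / (u + exp 1) ≤ 1 := (div_le_one (by positivity)).2 (by linarith [exp_pos 1])
  have hreact := reaction_term_le (r := r) (β := β) hμ.le hu (by linarith) (by positivity)
    (hq.trans hL)
  have hpow : u ^ 2 ≤ u ^ 2 * log (u + exp 1) ^ (1 - β) :=
    le_mul_of_one_le_right (sq_nonneg u) (one_le_rpow hL (by linarith))
  nlinarith [hC u hu, le_max_left C 1]

theorem reaction_term_estimate (μ r β : ℝ) (hμ : 0 < μ) (hβ₀ : 0 < β) (hβ₁ : β < 1) :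
    ∃ C > 0, ∀ u : ℝ, 0 ≤ u →
      (Real.log (u + Real.exp 1) + u / (u + Real.exp 1)) *
          (r * u - μ * u ^ 2 / (Real.log (u + Real.exp 1)) ^ β) +
        u * Real.log (u + Real.exp 1) ≤
      (μ / 2) * u ^ 2 * (Real.log (u + Real.exp 1)) ^ (1 - β) + C :=
  reaction_term_estimate_general μ r β hμ hβ₁
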